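/- Suppose f = f(x₁,x₂) depends only on the variables x₁ and x₂. Then ω_f = dx₁∧dy₁ + dx₂∧dy₂ + f dx₁∧dx₂ is a symplectic form on ℝ⁴ compatible with J_f: ω_f is closed and nondegenerate, ω_f(J_f v, J_f w) = ω_f(v,w) for all tangent vectors v,w, and ω_f(v, J_f v) > 0 for every nonzero tangent vector v. -/

import Mathlib

noncomputable section

/-- ℝ⁴ with coordinates (x₁, x₂, y₁, y₂) indexed by 0, 1, 2, 3. -/
abbrev E4 : Type := Fin 4 → ℝ

/-- Partial derivative of `g` in the `i`-th coordinate direction at `p`. -/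
def pd (i : Fin 4) (g : E4 → ℝ) (p : E4) : ℝ := fderiv ℝ g p (Pi.single i 1)

/-- Lie bracket of vector fields on ℝ⁴. -/
def lieBracket (X Y : E4 → E4) (p : E4) : E4 :=
  fderiv ℝ Y p (X p) - fderiv ℝ X p (Y p)

/-- Nijenhuis tensor `N_J(X,Y) = [JX,JY] - [X,Y] - J[JX,Y] - J[X,JY]`. -/
def nijenhuis (J : E4 → E4 → E4) (X Y : E4 → E4) (p : E4) : E4 :=
  lieBracket (fun x => J x (X x)) (fun x => J x (Y x)) p - lieBracket X Y p
    - J p (lieBracket (fun x => J x (X x)) Y p)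
    - J p (lieBracket X (fun x => J x (Y x)) p)

/-- The almost complex structure `J_f` on ℝ⁴:
`J_f ∂x₁ = f ∂x₂ + ∂y₁`, `J_f ∂x₂ = ∂y₂`, `J_f ∂y₁ = -∂x₁ - f ∂y₂`, `J_f ∂y₂ = -∂x₂`. -/
def Jf (f : E4 → ℝ) (p : E4) (v : E4) : E4 :=
  ![-(v 2), f p * v 0 - v 3, v 0, v 1 - f p * v 2]

/-- Exterior derivative of a 2-form on ℝ⁴ (given as a point-dependent bilinear form). -/
def extDeriv2 (ω : E4 → E4 → E4 → ℝ) (p u v w : E4) : ℝ :=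
  fderiv ℝ (fun x => ω x v w) p u - fderiv ℝ (fun x => ω x u w) p v
    + fderiv ℝ (fun x => ω x u v) p w

/-- A 2-form on ℝ⁴ is closed when its exterior derivative vanishes everywhere. -/
def IsClosed2 (ω : E4 → E4 → E4 → ℝ) : Prop := ∀ p u v w : E4, extDeriv2 ω p u v w = 0

/-- The 2-form `β = dx₁∧dx₂ - f dx₁∧dy₁ - dy₁∧dy₂`. -/
def betaF (f : E4 → ℝ) (p u v : E4) : ℝ :=
  (u 0 * v 1 - u 1 * v 0) - f p * (u 0 * v 2 - u 2 * v 0) - (u 2 * v 3 - u 3 * v 2)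

/-- The 2-form `γ = dx₁∧dy₂ - dx₂∧dy₁`. -/
def gammaF (p u v : E4) : ℝ :=
  (u 0 * v 3 - u 3 * v 0) - (u 1 * v 2 - u 2 * v 1)

/-- System (★) for the pair `(a, b)`:
`a_{y₁} - b_{x₁} + (fa)_{x₂} = 0`, `a_{x₁} + b_{y₁} + (fa)_{y₂} = 0`,
`a_{y₂} - b_{x₂} = 0`, `a_{x₂} + b_{y₂} = 0`. -/
def StarSystem (f a b : E4 → ℝ) : Prop :=
  (∀ p : E4, pd 2 a p - pd 0 b p + pd 1 (fun x => f x * a x) p = 0) ∧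
  (∀ p : E4, pd 0 a p + pd 2 b p + pd 3 (fun x => f x * a x) p = 0) ∧
  (∀ p : E4, pd 3 a p - pd 1 b p = 0) ∧
  (∀ p : E4, pd 1 a p + pd 3 b p = 0)

/-- The 2-form `ω_f = dx₁∧dy₁ + dx₂∧dy₂ + f dx₁∧dx₂`. -/
def omegaf (f : E4 → ℝ) (p u v : E4) : ℝ :=
  (u 0 * v 2 - u 2 * v 0) + (u 1 * v 3 - u 3 * v 1) + f p * (u 0 * v 1 - u 1 * v 0)

lemma fderiv_zero_dir (f : E4 → ℝ) (hf : ContDiff ℝ (⊤ : ℕ∞) f)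
    (hdep : ∀ p q : E4, p 0 = q 0 → p 1 = q 1 → f p = f q)
    (p v : E4) (h0 : v 0 = 0) (h1 : v 1 = 0) : fderiv ℝ f p v = 0 := by
  have hline : HasDerivAt (fun t : ℝ => p + t • v) v 0 := by
    simpa using ((hasDerivAt_id (0:ℝ)).smul_const v).const_add p
  have hfd : HasFDerivAt f (fderiv ℝ f p) ((fun t : ℝ => p + t • v) 0) := by
    simpa using (hf.differentiable (by simp) p).hasFDerivAt
  have hcomp : HasDerivAt (fun t : ℝ => f (p + t • v)) (fderiv ℝ f p v) 0 :=
    hfd.comp_hasDerivAt 0 hline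
  have hconst : (fun t : ℝ => f (p + t • v)) = fun _ => f p := by
    funext t
    exact hdep _ _ (by simp [h0]) (by simp [h1])
  rw [hconst] at hcomp
  simpa using hcomp.unique (hasDerivAt_const 0 (f p))

lemma fderiv_expand (f : E4 → ℝ) (p z : E4) :
    fderiv ℝ f p z = z 0 * fderiv ℝ f p (Pi.single 0 1) + z 1 * fderiv ℝ f p (Pi.single 1 1)
      + z 2 * fderiv ℝ f p (Pi.single 2 1) + z 3 * fderiv ℝ f p (Pi.single 3 1) := by
  have hz : z = z 0 • (Pi.single 0 1 : E4) + z 1 • (Pi.single 1 1 : E4)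
      + z 2 • (Pi.single 2 1 : E4) + z 3 • (Pi.single 3 1 : E4) := by
    funext j; fin_cases j <;> simp [Pi.single_apply]
  conv_lhs => rw [hz]
  simp [map_add, map_smul, smul_eq_mul]

lemma fderiv_omega (f : E4 → ℝ) (hf : ContDiff ℝ (⊤ : ℕ∞) f) (p a b u : E4) :
    fderiv ℝ (fun x => omegaf f x a b) p u
      = (a 0 * b 1 - a 1 * b 0) * fderiv ℝ f p u := by
  have hfun : (fun x => omegaf f x a b)
      = fun x => f x * (a 0 * b 1 - a 1 * b 0)
        + ((a 0 * b 2 - a 2 * b 0) + (a 1 * b 3 - a 3 * b 1)) := by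
    funext x; simp [omegaf]; ring
  rw [hfun, fderiv_add_const, fderiv_mul_const (hf.differentiable (by simp) p)]
  simp [mul_comm]

/-- Suppose `f = f(x₁, x₂)` depends only on the variables `x₁` and `x₂`.
Then `ω_f = dx₁∧dy₁ + dx₂∧dy₂ + f dx₁∧dx₂` is a symplectic form on ℝ⁴ compatible with
`J_f`: `ω_f` is closed and nondegenerate, `ω_f(J_f v, J_f w) = ω_f(v, w)` for all tangent
vectors `v, w`, and `ω_f(v, J_f v) > 0` for every nonzero tangent vector `v`. -/
theorem omegaf_symplectic_compatible (f : E4 → ℝ) (hf : ContDiff ℝ (⊤ : ℕ∞) f)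
    (hdep : ∀ p q : E4, p 0 = q 0 → p 1 = q 1 → f p = f q) :
    -- ω_f is closed
    IsClosed2 (omegaf f) ∧
    -- ω_f is nondegenerate (at every point)
    (∀ (p u : E4), (∀ v : E4, omegaf f p u v = 0) → u = 0) ∧
    -- ω_f is J_f-invariant
    (∀ p v w : E4, omegaf f p (Jf f p v) (Jf f p w) = omegaf f p v w) ∧
    -- ω_f(v, J_f v) > 0 for nonzero v
    (∀ p v : E4, v ≠ 0 → 0 < omegaf f p v (Jf f p v)) := by
  refine ⟨?_, ?_, ?_, ?_⟩
  · intro p u v w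
    have h2 : fderiv ℝ f p (Pi.single 2 1) = 0 :=
      fderiv_zero_dir f hf hdep p _ (by simp) (by simp)
    have h3 : fderiv ℝ f p (Pi.single 3 1) = 0 :=
      fderiv_zero_dir f hf hdep p _ (by simp) (by simp)
    have hD : ∀ z : E4, fderiv ℝ f p z
        = z 0 * fderiv ℝ f p (Pi.single 0 1) + z 1 * fderiv ℝ f p (Pi.single 1 1) := by
      intro z; rw [fderiv_expand, h2, h3]; ring
    unfold extDeriv2
    rw [fderiv_omega f hf, fderiv_omega f hf, fderiv_omega f hf, hD u, hD v, hD w]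
    ring
  · intro p u hu
    have h0 : u 0 = 0 := by simpa [omegaf, Pi.single_apply] using hu (Pi.single 2 1)
    have h1 : u 1 = 0 := by simpa [omegaf, Pi.single_apply] using hu (Pi.single 3 1)
    have h2 : u 2 = 0 := by
      have := hu (Pi.single 0 1)
      simp [omegaf, Pi.single_apply, h0, h1] at this
      linarith
    have h3 : u 3 = 0 := by
      have := hu (Pi.single 1 1)
      simp [omegaf, Pi.single_apply, h0, h1] at this
      linarith
    funext j; fin_cases j
    · simpa using h0
    · simpa using h1
    · simpa using h2
    · simpa using h3
  · intro p v w
    simp [omegaf, Jf]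
    ring
  · intro p v hv
    have hkey : omegaf f p v (Jf f p v)
        = v 0 ^ 2 + v 1 ^ 2 + v 2 ^ 2 + (v 3 - f p * v 0) ^ 2 := by
      simp [omegaf, Jf]; ring
    rw [hkey]
    obtain ⟨i, hi⟩ := Function.ne_iff.mp hv
    fin_cases i <;> simp only [Fin.isValue, Pi.zero_apply] at hi
    · have hi' : v 0 ≠ 0 := hi
      nlinarith [sq_nonneg (v 1), sq_nonneg (v 2), sq_nonneg (v 3 - f p * v 0),
        sq_pos_of_ne_zero hi']
    · have hi' : v 1 ≠ 0 := hi
      nlinarith [sq_nonneg (v 0), sq_nonneg (v 2), sq_nonneg (v 3 - f p * v 0),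
        sq_pos_of_ne_zero hi']
    · have hi' : v 2 ≠ 0 := hi
      nlinarith [sq_nonneg (v 0), sq_nonneg (v 1), sq_nonneg (v 3 - f p * v 0),
        sq_pos_of_ne_zero hi']
    · have hi' : v 3 ≠ 0 := hi
      by_cases h0 : v 0 = 0
      · have hne : v 3 - f p * v 0 ≠ 0 := by simpa [h0] using hi'
        nlinarith [sq_nonneg (v 1), sq_nonneg (v 2), sq_nonneg (v 0),
          sq_pos_of_ne_zero hne]
      · nlinarith [sq_nonneg (v 1), sq_nonneg (v 2), sq_nonneg (v 3 - f p * v 0),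
          sq_pos_of_ne_zero h0]
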